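/- arXiv:1202.0199 — 2 statements merged into one kernel-verified Lean document; each statement's English description precedes it below -/
import Mathlib

section
/- (Gaussian Formula) For every positive integer n, the alternating sum ∑_{m=0}^{n}(-1)^m · binom(n,m)_q equals 0 if n is odd, and equals ∏_{k odd, 1 ≤ k ≤ n}(1-q^k) if n is even. -/
open Polynomial Finset

/-- The Gaussian (q-)binomial coefficient as a polynomial, satisfying the
product formula `∏_{i=n-m+1}^{n}(1-q^i) / ∏_{i=1}^{m}(1-q^i)`. -/
noncomputable def qbinom (R : Type*) [CommRing R] : ℕ → ℕ → Polynomial R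
  | _, 0 => 1
  | 0, _+1 => 0
  | n+1, m+1 => qbinom R n (m+1) + X ^ (n - m) * qbinom R n m

/-!
With `S c n = ∑ₘ cᵐ [n, m]_q`, the two q-Pascal rules give `S (-1) (n+1) = S (-X) n - S (-1) n`
and `S (-X) (n+1) = S (-X) n - X ^ (n+1) * S (-1) n`. Eliminating `S (-X)` leaves
`S (-1) (n+2) = (1 - X ^ (n+1)) * S (-1) n`, and the formula follows by two-step induction
from `S (-1) 0 = 1` and `S (-1) 1 = 0`.
-/

section QBinom

variable (R : Type*) [CommRing R]

@[simp]
lemma qbinom_zero_right (n : ℕ) : qbinom R n 0 = 1 := by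
  cases n <;> rfl

@[simp]
lemma qbinom_zero_succ (m : ℕ) : qbinom R 0 (m + 1) = 0 := rfl

lemma qbinom_succ_succ (n m : ℕ) :
    qbinom R (n + 1) (m + 1) = qbinom R n (m + 1) + X ^ (n - m) * qbinom R n m := rfl

lemma qbinom_eq_zero_of_lt : ∀ {n m : ℕ}, n < m → qbinom R n m = 0
  | 0, _ + 1, _ => rfl
  | n + 1, m + 1, h => by
    rw [qbinom_succ_succ, qbinom_eq_zero_of_lt (by omega), qbinom_eq_zero_of_lt (by omega)]
    ring

lemma qbinom_succ_succ' (n m : ℕ) :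
    qbinom R (n + 1) (m + 1) = X ^ (m + 1) * qbinom R n (m + 1) + qbinom R n m := by
  induction n generalizing m with
  | zero => cases m <;> simp [qbinom_succ_succ]
  | succ n ih =>
    rw [qbinom_succ_succ R (n + 1) m]
    conv_lhs => rw [ih m]
    cases m with
    | zero => simp only [qbinom_succ_succ, qbinom_zero_right, Nat.sub_zero]; ring
    | succ k =>
      conv_lhs => rw [ih k, Nat.add_sub_add_right]
      rw [qbinom_succ_succ R n (k + 1), qbinom_succ_succ R n k]
      rcases lt_or_ge n (k + 1) with hlt | hle
      · rw [qbinom_eq_zero_of_lt R hlt, qbinom_eq_zero_of_lt R (by omega : n < k + 2)]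
        ring
      · have hpow : (X : R[X]) ^ (n - k) * X ^ (k + 1) =
            X ^ (k + 1 + 1) * X ^ (n - (k + 1)) := by
          rw [← pow_add, ← pow_add]; congr 1; omega
        linear_combination qbinom R n (k + 1) * hpow

lemma sum_range_succ_mul_qbinom (f : ℕ → R[X]) (n : ℕ) :
    ∑ m ∈ range (n + 2), f m * qbinom R n m = ∑ m ∈ range (n + 1), f m * qbinom R n m := by
  rw [sum_range_succ, qbinom_eq_zero_of_lt R (by omega), mul_zero, add_zero]

end QBinom

noncomputable def qbinomSum (R : Type*) [CommRing R] (c : R[X]) (n : ℕ) : R[X] :=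
  ∑ m ∈ range (n + 1), c ^ m * qbinom R n m

section QBinomSum

variable {R : Type*} [CommRing R]

@[simp]
lemma qbinomSum_zero (c : R[X]) : qbinomSum R c 0 = 1 := by
  simp [qbinomSum]

lemma qbinomSum_succ (c : R[X]) (n : ℕ) :
    qbinomSum R c (n + 1) = qbinomSum R (c * X) n + c * qbinomSum R c n := by
  have hshift : qbinomSum R (c * X) n =
      ∑ m ∈ range (n + 1), c ^ (m + 1) * X ^ (m + 1) * qbinom R n (m + 1) + 1 := by
    rw [qbinomSum, ← sum_range_succ_mul_qbinom, sum_range_succ']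
    simp [mul_pow]
  have hterm : ∀ m ∈ range (n + 1), c ^ (m + 1) * qbinom R (n + 1) (m + 1) =
      c ^ (m + 1) * X ^ (m + 1) * qbinom R n (m + 1) + c * (c ^ m * qbinom R n m) := by
    intro m _
    rw [qbinom_succ_succ']
    ring
  rw [hshift, qbinomSum, qbinomSum, sum_range_succ', sum_congr rfl hterm, sum_add_distrib,
    mul_sum, pow_zero, qbinom_zero_right, one_mul]
  ring

lemma qbinomSum_neg_X_succ (n : ℕ) :
    qbinomSum R (-X) (n + 1) = qbinomSum R (-X) n - X ^ (n + 1) * qbinomSum R (-1) n := by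
  have hterm : ∀ m ∈ range (n + 1), (-X : R[X]) ^ (m + 1) * (X ^ (n - m) * qbinom R n m) =
      -(X ^ (n + 1) * ((-1) ^ m * qbinom R n m)) := by
    intro m hm
    have hpow : (X : R[X]) ^ (m + 1) * X ^ (n - m) = X ^ (n + 1) := by
      rw [← pow_add]; congr 1; have := mem_range.mp hm; omega
    rw [neg_pow]
    linear_combination (-1) ^ (m + 1) * qbinom R n m * hpow
  have hshift : qbinomSum R (-X) n =
      ∑ m ∈ range (n + 1), (-X) ^ (m + 1) * qbinom R n (m + 1) + 1 := by
    rw [qbinomSum, ← sum_range_succ_mul_qbinom, sum_range_succ']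
    simp
  rw [qbinomSum, sum_range_succ']
  simp only [qbinom_succ_succ, mul_add, sum_add_distrib, sum_congr rfl hterm, sum_neg_distrib,
    ← mul_sum, qbinom_zero_right, pow_zero, mul_one]
  rw [hshift, qbinomSum]
  ring

lemma qbinomSum_neg_one_add_two (n : ℕ) :
    qbinomSum R (-1) (n + 2) = (1 - X ^ (n + 1)) * qbinomSum R (-1) n := by
  rw [qbinomSum_succ (-1) (n + 1), qbinomSum_succ (-1) n, neg_one_mul (X : R[X]),
    qbinomSum_neg_X_succ]
  ring

@[simp]
lemma qbinomSum_neg_one_one : qbinomSum R (-1) 1 = 0 := by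
  simp [qbinomSum, sum_range_succ, qbinom_succ_succ]

end QBinomSum

lemma filter_odd_Icc_add_two {n : ℕ} (hn : Even n) :
    (Icc 1 (n + 2)).filter Odd = insert (n + 1) ((Icc 1 n).filter Odd) := by
  ext k
  simp only [mem_filter, mem_Icc, mem_insert, Nat.odd_iff]
  have := Nat.even_iff.mp hn
  omega

theorem gaussian_formula_general (n : ℕ) :
    ∑ m ∈ Finset.range (n + 1), (-1 : Polynomial ℤ) ^ m * qbinom ℤ n m =
      if Odd n then 0
      else ∏ k ∈ (Finset.Icc 1 n).filter (fun k => Odd k), (1 - X ^ k) := by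
  change qbinomSum ℤ (-1) n = _
  induction n using Nat.twoStepInduction with
  | zero => simp
  | one => simp
  | more n ih _ =>
    rw [qbinomSum_neg_one_add_two, ih]
    rcases Nat.even_or_odd n with hn | hn
    · have hn2 : Even (n + 2) := hn.add even_two
      rw [if_neg (Nat.not_odd_iff_even.mpr hn), if_neg (Nat.not_odd_iff_even.mpr hn2),
        filter_odd_Icc_add_two hn, prod_insert (by simp)]
    · rw [if_pos hn, if_pos (hn.add_even even_two), mul_zero]

/-- The Gaussian Formula. -/
theorem gaussian_formula (n : ℕ) (hn : 0 < n) :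
    ∑ m ∈ Finset.range (n + 1), (-1 : Polynomial ℤ) ^ m * qbinom ℤ n m =
      if Odd n then 0
      else ∏ k ∈ (Finset.Icc 1 n).filter (fun k => Odd k), (1 - X ^ k) :=
  gaussian_formula_general n
end

section
/- Let c ≥ 1, let ζ be a primitive 2c-th root of unity in ℂ, and let P ∈ ℤ[ζ][x]. Define Q(P,n) = ∑_{m=0}^{n} ζ^m P(m) binom(n,m)_q. Then for all n ≥ 2, Q(P(x),n) = Q(P(x) + ζ·P(x+1), n-1) − ζ(1-q^{n-1})·Q(P(x+1), n-2). -/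
open Polynomial Finset

/-- The subring ℤ[ζ] of ℂ. -/
noncomputable abbrev Zadj (ζ : ℂ) : Type := Algebra.adjoin ℤ ({ζ} : Set ℂ)

/-- ζ as an element of ℤ[ζ]. -/
noncomputable def zeta (ζ : ℂ) : Zadj ζ := ⟨ζ, Algebra.self_mem_adjoin_singleton ℤ ζ⟩

/-- `Q(P,n) = ∑_{m=0}^{n} ζ^m P(m) binom(n,m)_q` in ℤ[ζ][q]. -/
noncomputable def Qsum (ζ : ℂ) (P : Polynomial (Zadj ζ)) (n : ℕ) : Polynomial (Zadj ζ) :=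
  ∑ m ∈ Finset.range (n + 1), C (zeta ζ ^ m * P.eval (m : Zadj ζ)) * qbinom (Zadj ζ) n m

/-!
Write `[n, m]` for `qbinom R n m`. The defining Pascal rule `[n+1, m+1] = [n, m+1] + q^(n-m) [n, m]`
has a mirror image `[n+1, m+1] = q^(m+1) [n, m+1] + [n, m]`, and eliminating `[n, m+1]` between
the two gives the absorption identity `(1 - q^(m+1)) [n+1, m+1] = (1 - q^(n+1)) [n, m]`. Together
with the mirrored rule this expresses `[n+2, m+1]` through `[n+1, m+1]`, `[n+1, m]` and `[n, m]`;
summing against `ζ^m P(m)` and shifting the index turns the three sums into the three `Q`'s.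
-/

namespace qbinom

variable {R : Type*} [CommRing R]

theorem succ_succ (n m : ℕ) :
    qbinom R (n + 1) (m + 1) = qbinom R n (m + 1) + X ^ (n - m) * qbinom R n m := rfl

@[simp]
theorem zero_right (n : ℕ) : qbinom R n 0 = 1 := by
  cases n <;> rfl

theorem eq_zero_of_lt : ∀ {n m : ℕ}, n < m → qbinom R n m = 0
  | 0, _ + 1, _ => rfl
  | n + 1, m + 1, h => by
    rw [succ_succ, eq_zero_of_lt (by omega), eq_zero_of_lt (by omega), mul_zero, add_zero]

theorem succ_succ' : ∀ n m : ℕ,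
    qbinom R (n + 1) (m + 1) = X ^ (m + 1) * qbinom R n (m + 1) + qbinom R n m
  | 0, 0 => by simp [succ_succ, eq_zero_of_lt]
  | 0, m + 1 => by simp [succ_succ, eq_zero_of_lt]
  | n + 1, 0 => by
    have ih := succ_succ' n 0
    have pascal := succ_succ (R := R) n 0
    rw [succ_succ (n + 1)]
    simp only [zero_right, Nat.sub_zero, mul_one] at ih pascal ⊢
    linear_combination ih - X * pascal
  | n + 1, k + 1 => by
    rw [succ_succ (n + 1)]
    rcases lt_or_ge n (k + 1) with h | h
    · rw [eq_zero_of_lt (by omega : n + 1 < k + 2), Nat.sub_eq_zero_of_le (by omega)]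
      ring
    · obtain ⟨d, rfl⟩ : ∃ d, n = d + (k + 1) := ⟨n - (k + 1), by omega⟩
      have pascal_k := succ_succ (R := R) (d + (k + 1)) k
      have pascal_k1 := succ_succ (R := R) (d + (k + 1)) (k + 1)
      rw [show d + (k + 1) - k = d + 1 by omega] at pascal_k
      rw [Nat.add_sub_cancel] at pascal_k1
      rw [show d + (k + 1) + 1 - (k + 1) = d + 1 by omega]
      linear_combination succ_succ' (d + (k + 1)) (k + 1) + X ^ (d + 1) * succ_succ' (d + (k + 1)) k
        - X ^ (k + 2) * pascal_k1 - pascal_k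

theorem one_sub_X_pow_mul_succ_succ (n m : ℕ) :
    (1 - X ^ (m + 1)) * qbinom R (n + 1) (m + 1) = (1 - X ^ (n + 1)) * qbinom R n m := by
  rcases lt_or_ge n m with h | h
  · rw [eq_zero_of_lt h, eq_zero_of_lt (by omega : n + 1 < m + 1), mul_zero, mul_zero]
  · obtain ⟨d, rfl⟩ : ∃ d, n = d + m := ⟨n - m, by omega⟩
    have pascal := succ_succ (R := R) (d + m) m
    rw [Nat.add_sub_cancel] at pascal
    linear_combination succ_succ' (R := R) (d + m) m - X ^ (m + 1) * pascal

theorem add_two_succ (n m : ℕ) :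
    qbinom R (n + 2) (m + 1) =
      qbinom R (n + 1) (m + 1) + qbinom R (n + 1) m - (1 - X ^ (n + 1)) * qbinom R n m := by
  linear_combination succ_succ' (R := R) (n + 1) m - one_sub_X_pow_mul_succ_succ (R := R) n m

theorem sum_range_add_two_mul_eq_sum_range_succ (g : ℕ → R[X]) (n : ℕ) :
    ∑ m ∈ range (n + 2), g m * qbinom R n m = ∑ m ∈ range (n + 1), g m * qbinom R n m := by
  rw [sum_range_succ, eq_zero_of_lt (by omega), mul_zero, add_zero]

theorem sum_range_mul_add_two (f : ℕ → R[X]) (n : ℕ) :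
    ∑ m ∈ range (n + 3), f m * qbinom R (n + 2) m =
      ∑ m ∈ range (n + 2), (f m + f (m + 1)) * qbinom R (n + 1) m -
        (1 - X ^ (n + 1)) * ∑ m ∈ range (n + 1), f (m + 1) * qbinom R n m := by
  calc ∑ m ∈ range (n + 3), f m * qbinom R (n + 2) m
      = ∑ m ∈ range (n + 2), (f (m + 1) * qbinom R (n + 1) (m + 1)
          + f (m + 1) * qbinom R (n + 1) m - (1 - X ^ (n + 1)) * (f (m + 1) * qbinom R n m))
          + f 0 * qbinom R (n + 1) 0 := by
        rw [sum_range_succ']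
        congr 1
        exact sum_congr rfl fun m _ => by rw [add_two_succ]; ring
    _ = ∑ m ∈ range (n + 3), f m * qbinom R (n + 1) m
          + ∑ m ∈ range (n + 2), f (m + 1) * qbinom R (n + 1) m
          - (1 - X ^ (n + 1)) * ∑ m ∈ range (n + 2), f (m + 1) * qbinom R n m := by
        rw [sum_range_succ' (fun m => f m * qbinom R (n + 1) m), sum_sub_distrib, sum_add_distrib,
          mul_sum]
        ring
    _ = _ := by
        rw [sum_range_add_two_mul_eq_sum_range_succ,
          sum_range_add_two_mul_eq_sum_range_succ (fun m => f (m + 1)), ← sum_add_distrib]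
        simp only [add_mul]

end qbinom

theorem Qsum_recursion_general (ζ : ℂ) (P : Polynomial (Zadj ζ)) (n : ℕ) (hn : 2 ≤ n) :
    Qsum ζ P n =
      Qsum ζ (P + C (zeta ζ) * P.comp (X + 1)) (n - 1) -
        C (zeta ζ) * (1 - X ^ (n - 1)) * Qsum ζ (P.comp (X + 1)) (n - 2) := by
  obtain ⟨k, rfl⟩ : ∃ k, n = k + 2 := ⟨n - 2, by omega⟩
  have eval_shift (m : ℕ) :
      (P.comp (X + 1)).eval (m : Zadj ζ) = P.eval ((m + 1 : ℕ) : Zadj ζ) := by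
    rw [eval_comp, eval_add, eval_X, eval_one, Nat.cast_succ]
  rw [show k + 2 - 1 = k + 1 by omega, Nat.add_sub_cancel]
  unfold Qsum
  rw [qbinom.sum_range_mul_add_two (fun m => C (zeta ζ ^ m * P.eval (m : Zadj ζ))) k,
    mul_assoc (C (zeta ζ)), mul_left_comm (C (zeta ζ)), Finset.mul_sum (a := C (zeta ζ))]
  refine congrArg₂ (· - (1 - X ^ (k + 1)) * ·) (sum_congr rfl fun m _ => ?_)
    (sum_congr rfl fun m _ => ?_)
  · rw [eval_add, eval_mul, eval_C, eval_shift, ← C_add]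
    ring_nf
  · rw [eval_shift, ← mul_assoc, ← C_mul]
    ring_nf

theorem Qsum_recursion (c : ℕ) (hc : 1 ≤ c) (ζ : ℂ) (hζ : IsPrimitiveRoot ζ (2 * c))
    (P : Polynomial (Zadj ζ)) (n : ℕ) (hn : 2 ≤ n) :
    Qsum ζ P n =
      Qsum ζ (P + C (zeta ζ) * P.comp (X + 1)) (n - 1) -
        C (zeta ζ) * (1 - X ^ (n - 1)) * Qsum ζ (P.comp (X + 1)) (n - 2) :=
  Qsum_recursion_general ζ P n hn
end
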